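/- Let V_1, ..., V_j and U_1, ..., U_m be distinct coordinates of I and let D ⊆ I be disjoint from all of them. Let C_i ⊆ I with V_i ∉ C_i and E_k ⊆ I with U_k ∉ E_k, and assume the factorization: for every assignment ω ∈ Ω, (∏_{k=1}^m P(U_k = ω_{U_k} | E_k = ω|_{E_k})) · (∏_{i=1}^j P(V_i = ω_{V_i} | C_i = ω|_{C_i})) = P({V_1, ..., V_j, U_1, ..., U_m} = ω | D = ω|_D). Let N ⊆ {U_1, ..., U_m} be such that no element of N belongs to any C_i (1 ≤ i ≤ j) nor to any E_k with U_k ∉ N, and such that N admits an enumeration U'_1, ..., U'_r with U'_s ∉ E_{U'_t} whenever s < t. Then for every assignment ω ∈ Ω: (∏_{U_k ∉ N} P(U_k = ω_{U_k} | E_k = ω|_{E_k})) · (∏_{i=1}^j P(V_i = ω_{V_i} | C_i = ω|_{C_i})) = P(({V_1, ..., V_j} ∪ ({U_1, ..., U_m} \ N)) = ω | D = ω|_D). -/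
import Mathlib


open Finset

/-- Marginal probability `P(S = ω|_S)` of a strictly positive pmf `P` on a finite
product: the sum of `P ω'` over all assignments `ω'` agreeing with `ω` on `S`. -/
noncomputable def marg {I : Type} [Fintype I] [DecidableEq I] {F : I → Type}
    [∀ i, Fintype (F i)] [∀ i, DecidableEq (F i)]
    (P : (∀ i, F i) → ℝ) (S : Finset I) (ω : ∀ i, F i) : ℝ :=
  ∑ ω' : ∀ i, F i, if ∀ i ∈ S, ω' i = ω i then P ω' else 0

/-- Elementary conditional probability `P(T = ω|_T | S = ω|_S)`. -/
noncomputable def condP {I : Type} [Fintype I] [DecidableEq I] {F : I → Type}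
    [∀ i, Fintype (F i)] [∀ i, DecidableEq (F i)]
    (P : (∀ i, F i) → ℝ) (T S : Finset I) (ω : ∀ i, F i) : ℝ :=
  marg P (S ∪ T) ω / marg P S ω

/-- Conditional independence of coordinates `a` and `b` given the set `S`. -/
def condIndep {I : Type} [Fintype I] [DecidableEq I] {F : I → Type}
    [∀ i, Fintype (F i)] [∀ i, DecidableEq (F i)]
    (P : (∀ i, F i) → ℝ) (a b : I) (S : Finset I) : Prop :=
  ∀ ω, condP P {a, b} S ω = condP P {a} S ω * condP P {b} S ω


section Helpers
variable {I : Type} [Fintype I] [DecidableEq I] {F : I → Type}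
    [∀ i, Fintype (F i)] [∀ i, DecidableEq (F i)]

lemma marg_congr (P : (∀ i, F i) → ℝ) (S : Finset I) {ω ω' : ∀ i, F i}
    (h : ∀ i ∈ S, ω i = ω' i) : marg P S ω = marg P S ω' := by
  unfold marg
  refine Finset.sum_congr rfl fun x _ => ?_
  by_cases hx : ∀ i ∈ S, x i = ω i
  · rw [if_pos hx, if_pos (fun i hi => (hx i hi).trans (h i hi))]
  · rw [if_neg hx, if_neg (fun hx' => hx (fun i hi => (hx' i hi).trans (h i hi).symm))]

lemma marg_update (P : (∀ i, F i) → ℝ) {S : Finset I} {a : I} (ha : a ∉ S)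
    (ω : ∀ i, F i) (x : F a) : marg P S (Function.update ω a x) = marg P S ω :=
  (marg_congr P S (fun i hi => Function.update_of_ne (fun e : i = a => ha (e ▸ hi)) x ω))

lemma marg_pos (P : (∀ i, F i) → ℝ) (hpos : ∀ ω, 0 < P ω) (S : Finset I) (ω : ∀ i, F i) :
    0 < marg P S ω := by
  unfold marg
  refine Finset.sum_pos' (fun ω' _ => ?_) ⟨ω, Finset.mem_univ ω, ?_⟩
  · split
    · exact (hpos ω').le
    · exact le_refl 0
  · rw [if_pos (fun i _ => rfl)]
    exact hpos ω

lemma sum_marg (P : (∀ i, F i) → ℝ) {S : Finset I} {a : I} (ha : a ∈ S) (ω : ∀ i, F i) :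
    ∑ x : F a, marg P S (Function.update ω a x) = marg P (S.erase a) ω := by
  unfold marg
  rw [Finset.sum_comm]
  refine Finset.sum_congr rfl fun ω' _ => ?_
  have hcond : ∀ x : F a, (∀ i ∈ S, ω' i = Function.update ω a x i) ↔
      (ω' a = x ∧ ∀ i ∈ S.erase a, ω' i = ω i) := by
    intro x
    constructor
    · intro h
      refine ⟨by simpa using h a ha, fun i hi => ?_⟩
      have hia : i ≠ a := (Finset.mem_erase.mp hi).1
      simpa [Function.update_of_ne hia] using h i (Finset.mem_erase.mp hi).2
    · rintro ⟨h1, h2⟩ i hi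
      by_cases hia : i = a
      · subst hia; simpa using h1
      · rw [Function.update_of_ne hia]
        exact h2 i (Finset.mem_erase.mpr ⟨hia, hi⟩)
  simp only [hcond]
  by_cases h2 : ∀ i ∈ S.erase a, ω' i = ω i
  · rw [if_pos h2, Finset.sum_eq_single (ω' a)]
    · rw [if_pos ⟨rfl, h2⟩]
    · intro b _ hb
      exact if_neg (fun hc => hb (hc.1.symm))
    · intro h; exact absurd (Finset.mem_univ _) h
  · rw [if_neg h2]
    exact Finset.sum_eq_zero fun b _ => if_neg (fun hc => h2 hc.2)

lemma condP_update (P : (∀ i, F i) → ℝ) {T S : Finset I} {a : I} (haS : a ∉ S) (haT : a ∉ T)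
    (ω : ∀ i, F i) (x : F a) : condP P T S (Function.update ω a x) = condP P T S ω := by
  unfold condP
  rw [marg_update P (by simp [haS, haT]) ω x, marg_update P haS ω x]

lemma sum_condP (P : (∀ i, F i) → ℝ) {T S : Finset I} {a : I} (haS : a ∉ S) (haT : a ∈ T)
    (ω : ∀ i, F i) :
    ∑ x : F a, condP P T S (Function.update ω a x) = condP P (T.erase a) S ω := by
  unfold condP
  have hden : ∀ x : F a, marg P S (Function.update ω a x) = marg P S ω :=
    fun x => marg_update P haS ω x
  simp only [hden]
  rw [← Finset.sum_div]
  congr 1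
  rw [sum_marg P (Finset.mem_union_right S haT) ω, Finset.erase_union_distrib,
    Finset.erase_eq_of_notMem haS]

lemma sum_condP_one (P : (∀ i, F i) → ℝ) (hpos : ∀ ω, 0 < P ω) {S : Finset I} {a : I}
    (haS : a ∉ S) (ω : ∀ i, F i) :
    ∑ x : F a, condP P {a} S (Function.update ω a x) = 1 := by
  rw [sum_condP P haS (Finset.mem_singleton_self a) ω, Finset.erase_singleton]
  unfold condP
  rw [Finset.union_empty]
  exact div_self (marg_pos P hpos S ω).ne'

end Helpers

theorem eliminate_M_minus {I : Type} [Fintype I] [DecidableEq I] {F : I → Type}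
    [∀ i, Fintype (F i)] [∀ i, DecidableEq (F i)] [∀ i, Nonempty (F i)]
    (P : (∀ i, F i) → ℝ) (hpos : ∀ ω, 0 < P ω) (hsum : ∑ ω, P ω = 1)
    {j m : ℕ} (V : Fin j → I) (hV : Function.Injective V)
    (U : Fin m → I) (hU : Function.Injective U)
    (hVU : ∀ i k, V i ≠ U k)
    (D : Finset I) (hDV : ∀ i, V i ∉ D) (hDU : ∀ k, U k ∉ D)
    (C : Fin j → Finset I) (hC : ∀ i, V i ∉ C i)
    (E : Fin m → Finset I) (hE : ∀ k, U k ∉ E k)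
    (hfact : ∀ ω, (∏ k, condP P {U k} (E k) ω) * (∏ i, condP P {V i} (C i) ω) =
      condP P (univ.image V ∪ univ.image U) D ω)
    (N : Finset (Fin m))
    -- no element of N belongs to any C_i
    (hN1 : ∀ k ∈ N, ∀ i : Fin j, U k ∉ C i)
    -- nor to any E_k' with U_k' ∉ N
    (hN2 : ∀ k ∈ N, ∀ k' : Fin m, k' ∉ N → U k ∉ E k')
    -- N admits an enumeration U'_1, ..., U'_r with U'_s ∉ E_{U'_t} whenever s < t
    (hN3 : ∃ (r : ℕ) (e : Fin r → Fin m), Function.Injective e ∧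
      (∀ k : Fin m, k ∈ N ↔ ∃ s, e s = k) ∧
      ∀ s t : Fin r, s < t → U (e s) ∉ E (e t)) :
    ∀ ω, (∏ k ∈ Nᶜ, condP P {U k} (E k) ω) * (∏ i, condP P {V i} (C i) ω) =
      condP P (univ.image V ∪ Nᶜ.image U) D ω := by
  classical
  suffices key : ∀ n : ℕ, ∀ N : Finset (Fin m),
      N.card = n →
      (∀ k ∈ N, ∀ i : Fin j, U k ∉ C i) →
      (∀ k ∈ N, ∀ k' : Fin m, k' ∉ N → U k ∉ E k') →
      (∃ (r : ℕ) (e : Fin r → Fin m), Function.Injective e ∧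
        (∀ k : Fin m, k ∈ N ↔ ∃ s, e s = k) ∧
        ∀ s t : Fin r, s < t → U (e s) ∉ E (e t)) →
      ∀ ω, (∏ k ∈ Nᶜ, condP P {U k} (E k) ω) * (∏ i, condP P {V i} (C i) ω) =
        condP P (univ.image V ∪ Nᶜ.image U) D ω by
    exact key N.card N rfl hN1 hN2 hN3
  intro n
  induction n with
  | zero =>
    intro N hcard _ _ _ ω
    have hNe : N = ∅ := Finset.card_eq_zero.mp hcard
    subst hNe
    simpa [Finset.compl_empty] using hfact ω
  | succ n ih =>
    intro N hcard hN1 hN2 hN3 ω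
    obtain ⟨r, e, einj, hrange, hord⟩ := hN3
    have hNr : N = Finset.univ.image e := by
      ext k
      simp only [Finset.mem_image, Finset.mem_univ, true_and]
      rw [hrange k]
    have hr : r = n + 1 := by
      have h1 : (Finset.univ.image e).card = r := by
        rw [Finset.card_image_of_injective _ einj, Finset.card_univ, Fintype.card_fin]
      rw [← hNr, hcard] at h1
      omega
    subst hr
    set k₀ := e (Fin.last n) with hk₀
    have hk₀N : k₀ ∈ N := (hrange k₀).mpr ⟨Fin.last n, rfl⟩
    set N' := N.erase k₀ with hN'def
    have hcard' : N'.card = n := by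
      rw [hN'def, Finset.card_erase_of_mem hk₀N, hcard]
      omega
    have hmem' : ∀ k, k ∈ N' ↔ ∃ s : Fin n, e s.castSucc = k := by
      intro k
      rw [hN'def, Finset.mem_erase]
      constructor
      · rintro ⟨hne, hkN⟩
        obtain ⟨t, rfl⟩ := (hrange k).mp hkN
        have ht : (t : ℕ) < n := by
          rcases lt_or_eq_of_le (Nat.lt_succ_iff.mp t.isLt) with h | h
          · exact h
          · exact absurd (by ext; simp [h] : t = Fin.last n) (fun he => hne (by rw [he]))
        exact ⟨⟨t, ht⟩, congrArg e (by ext; simp)⟩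
      · rintro ⟨s, rfl⟩
        refine ⟨fun he => ?_, (hrange _).mpr ⟨s.castSucc, rfl⟩⟩
        have := einj he
        have : (s : ℕ) = n := by simpa [Fin.ext_iff] using this
        omega
    have hN1' : ∀ k ∈ N', ∀ i : Fin j, U k ∉ C i :=
      fun k hk => hN1 k (Finset.mem_of_mem_erase hk)
    have hN2' : ∀ k ∈ N', ∀ k' : Fin m, k' ∉ N' → U k ∉ E k' := by
      intro k hk k' hk'
      by_cases hk'N : k' ∈ N
      · have hk'eq : k' = k₀ := by
          by_contra hne
          exact hk' (Finset.mem_erase.mpr ⟨hne, hk'N⟩)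
        subst hk'eq
        obtain ⟨s, rfl⟩ := (hmem' k).mp hk
        exact hord s.castSucc (Fin.last n) (Fin.castSucc_lt_last s)
      · exact hN2 k (Finset.mem_of_mem_erase hk) k' hk'N
    have hN3' : ∃ (r : ℕ) (e' : Fin r → Fin m), Function.Injective e' ∧
        (∀ k : Fin m, k ∈ N' ↔ ∃ s, e' s = k) ∧
        ∀ s t : Fin r, s < t → U (e' s) ∉ E (e' t) :=
      ⟨n, fun s => e s.castSucc,
        fun s t h => by
          have := einj h
          exact Fin.castSucc_injective n this,
        hmem',
        fun s t hst => hord s.castSucc t.castSucc (by simpa using hst)⟩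
    have heq := ih N' hcard' hN1' hN2' hN3'
    -- now sum out the coordinate a := U k₀
    have haD : U k₀ ∉ D := hDU k₀
    have haE0 : U k₀ ∉ E k₀ := hE k₀
    have hcompl : N'ᶜ = insert k₀ Nᶜ := by
      rw [hN'def, Finset.compl_erase]
    have hk₀nc : k₀ ∉ Nᶜ := by simp [hk₀N]
    have hVfac : ∀ x : F (U k₀),
        (∏ i, condP P {V i} (C i) (Function.update ω (U k₀) x)) =
        ∏ i, condP P {V i} (C i) ω := by
      intro x
      refine Finset.prod_congr rfl fun i _ => ?_
      exact condP_update P (hN1 k₀ hk₀N i) (by simp [(hVU i k₀).symm, Ne.symm]) ω x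
    have hUfac : ∀ x : F (U k₀), ∀ k ∈ Nᶜ,
        condP P {U k} (E k) (Function.update ω (U k₀) x) = condP P {U k} (E k) ω := by
      intro x k hk
      have hkN : k ∉ N := Finset.mem_compl.mp hk
      have hne : U k₀ ≠ U k := fun h => hkN (hU h ▸ hk₀N)
      exact condP_update P (hN2 k₀ hk₀N k hkN) (by simp [hne]) ω x
    have hsumL : ∑ x : F (U k₀),
        ((∏ k ∈ N'ᶜ, condP P {U k} (E k) (Function.update ω (U k₀) x)) *
          (∏ i, condP P {V i} (C i) (Function.update ω (U k₀) x)))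
        = (∏ k ∈ Nᶜ, condP P {U k} (E k) ω) * (∏ i, condP P {V i} (C i) ω) := by
      have step : ∀ x : F (U k₀),
          ((∏ k ∈ N'ᶜ, condP P {U k} (E k) (Function.update ω (U k₀) x)) *
            (∏ i, condP P {V i} (C i) (Function.update ω (U k₀) x)))
          = condP P {U k₀} (E k₀) (Function.update ω (U k₀) x) *
            ((∏ k ∈ Nᶜ, condP P {U k} (E k) ω) * (∏ i, condP P {V i} (C i) ω)) := by
        intro x
        rw [hcompl, Finset.prod_insert hk₀nc, hVfac x,
          Finset.prod_congr rfl (hUfac x), mul_assoc]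
      rw [Finset.sum_congr rfl (fun x _ => step x), ← Finset.sum_mul,
        sum_condP_one P hpos haE0 ω, one_mul]
    have hamem : U k₀ ∈ univ.image V ∪ N'ᶜ.image U := by
      refine Finset.mem_union_right _ (Finset.mem_image.mpr ⟨k₀, ?_, rfl⟩)
      rw [hcompl]; exact Finset.mem_insert_self _ _
    have hsumR : ∑ x : F (U k₀),
        condP P (univ.image V ∪ N'ᶜ.image U) D (Function.update ω (U k₀) x)
        = condP P (univ.image V ∪ Nᶜ.image U) D ω := by
      rw [sum_condP P haD hamem ω]
      congr 1
      ext i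
      simp only [Finset.mem_erase, Finset.mem_union, Finset.mem_image, Finset.mem_univ,
        true_and, hcompl, Finset.mem_insert]
      constructor
      · rintro ⟨hne, h | ⟨k, hk | hk, rfl⟩⟩
        · exact Or.inl h
        · subst hk; exact absurd rfl hne
        · exact Or.inr ⟨k, hk, rfl⟩
      · rintro (⟨i', rfl⟩ | ⟨k, hk, rfl⟩)
        · exact ⟨(hVU i' k₀), Or.inl ⟨i', rfl⟩⟩
        · have hkN : k ∉ N := Finset.mem_compl.mp hk
          have hne : U k ≠ U k₀ := fun h => hkN (hU h ▸ hk₀N)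
          exact ⟨hne, Or.inr ⟨k, Or.inr hk, rfl⟩⟩
    calc (∏ k ∈ Nᶜ, condP P {U k} (E k) ω) * (∏ i, condP P {V i} (C i) ω)
        = ∑ x : F (U k₀),
            ((∏ k ∈ N'ᶜ, condP P {U k} (E k) (Function.update ω (U k₀) x)) *
              (∏ i, condP P {V i} (C i) (Function.update ω (U k₀) x))) := hsumL.symm
      _ = ∑ x : F (U k₀),
            condP P (univ.image V ∪ N'ᶜ.image U) D (Function.update ω (U k₀) x) :=
          Finset.sum_congr rfl fun x _ => heq (Function.update ω (U k₀) x)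
      _ = condP P (univ.image V ∪ Nᶜ.image U) D ω := hsumR
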